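/- arXiv:1601.05783 — 3 statements merged into one kernel-verified Lean document; each statement's English description precedes it below -/
import Mathlib

section
/- For every C > 0, κ > 0 and s ∈ (0,1) there exists C' > 0 with the following property: for all μ₀ > 0 and all nonnegative real numbers x, y, z, N such that x ≤ C·z^{1−s}·y^{s} and such that for every μ ≥ μ₀ one has z ≤ C·exp(κ·μ)·N + (C/μ)·y, it holds that for every ν ≥ μ₀^{1−s}, x ≤ C'·ν^{s/(1−s)}·exp(κ·ν^{1/(1−s)})·N + (C'/ν)·y. -/
/-!
Take `μ = ν^{1/(1-s)}`, so that `μ ≥ μ₀`, `μ^{1-s} = ν` and `μ^s = ν^{s/(1-s)}`, and insert the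
unique-continuation bound at this `μ` into the interpolation inequality. Subadditivity of
`t ↦ t^{1-s}` splits `z^{1-s} y^s` in two. The high-frequency part `(C y/μ)^{1-s} y^s` is already
`C^{1-s} y/ν`; the observation part `A^{1-s} y^s`, `A = C e^{κμ} N`, is split by Young's inequality with the weight
`μ^s` (the paper's choice `η^{1/(s(1-s))} = 1/μ`), which balances it as `μ^s A + y/μ^{1-s}`.
-/

open Real

section

variable {s : ℝ}

theorem rpow_one_sub_mul_rpow_le_young {a y μ : ℝ} (hs0 : 0 ≤ s) (hs1 : s ≤ 1) (ha : 0 ≤ a)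
    (hy : 0 ≤ y) (hμ : 0 < μ) :
    a ^ (1 - s) * y ^ s ≤ (1 - s) * (μ ^ s * a) + s * (y / μ ^ (1 - s)) :=
  calc a ^ (1 - s) * y ^ s = (μ ^ s * a) ^ (1 - s) * (y / μ ^ (1 - s)) ^ s := by
        rw [mul_rpow (by positivity) ha, div_rpow hy (by positivity), ← rpow_mul hμ.le,
          ← rpow_mul hμ.le, mul_comm s (1 - s)]
        field_simp
    _ ≤ _ := geom_mean_le_arith_mean2_weighted (sub_nonneg.2 hs1) hs0 (by positivity)
        (by positivity) (sub_add_cancel 1 s)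

theorem le_of_interpolation_of_le_add {C A x y z μ : ℝ} (hs0 : 0 ≤ s) (hs1 : s ≤ 1)
    (hC : 0 ≤ C) (hA : 0 ≤ A) (hy : 0 ≤ y) (hz : 0 ≤ z) (hμ : 0 < μ)
    (hx : x ≤ C * z ^ (1 - s) * y ^ s) (hzA : z ≤ A + C / μ * y) :
    x ≤ C * (1 - s) * μ ^ s * A + C * (s + C ^ (1 - s)) * y / μ ^ (1 - s) := by
  have hsplit : z ^ (1 - s) ≤ A ^ (1 - s) + (C / μ * y) ^ (1 - s) :=
    (rpow_le_rpow hz hzA (sub_nonneg.2 hs1)).trans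
      (rpow_add_le_add_rpow hA (by positivity) (sub_nonneg.2 hs1) (by linarith))
  have hhigh : (C / μ * y) ^ (1 - s) * y ^ s = C ^ (1 - s) * y / μ ^ (1 - s) := by
    rw [mul_rpow (by positivity) hy, mul_assoc, ← rpow_add' hy (by norm_num), sub_add_cancel,
      rpow_one, div_rpow hC hμ.le]
    ring
  have hlow := rpow_one_sub_mul_rpow_le_young hs0 hs1 hA hy hμ
  calc x ≤ C * z ^ (1 - s) * y ^ s := hx
    _ ≤ C * (A ^ (1 - s) + (C / μ * y) ^ (1 - s)) * y ^ s := by gcongr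
    _ = C * (A ^ (1 - s) * y ^ s) + C * ((C / μ * y) ^ (1 - s) * y ^ s) := by ring
    _ ≤ C * ((1 - s) * (μ ^ s * A) + s * (y / μ ^ (1 - s)))
        + C * (C ^ (1 - s) * y / μ ^ (1 - s)) := by rw [hhigh]; gcongr
    _ = _ := by ring

end

theorem stmt_3_general (C κ s : ℝ) (hC : 0 < C) (hs : s ∈ Set.Ioo (0 : ℝ) 1) :
    ∃ C' : ℝ, 0 < C' ∧
      ∀ μ₀ x y z N : ℝ, 0 < μ₀ → 0 ≤ x → 0 ≤ y → 0 ≤ z → 0 ≤ N →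
        x ≤ C * z ^ (1 - s) * y ^ s →
        (∀ μ : ℝ, μ₀ ≤ μ → z ≤ C * Real.exp (κ * μ) * N + (C / μ) * y) →
        ∀ ν : ℝ, μ₀ ^ (1 - s) ≤ ν →
          x ≤ C' * ν ^ (s / (1 - s)) * Real.exp (κ * ν ^ (1 / (1 - s))) * N + (C' / ν) * y := by
  obtain ⟨hs0, hs1⟩ := hs
  have h1s : 0 < 1 - s := sub_pos.2 hs1
  have hCs : 0 < C ^ (1 - s) := rpow_pos_of_pos hC _
  refine ⟨C * (C + 1 + C ^ (1 - s)), by positivity, ?_⟩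
  intro μ₀ x y z N hμ₀ _ hy hz hN hinterp huc ν hν
  have hν0 : 0 < ν := (rpow_pos_of_pos hμ₀ _).trans_le hν
  set μ := ν ^ (1 / (1 - s)) with hμ_def
  have hμ : 0 < μ := rpow_pos_of_pos hν0 _
  have hμν : μ ^ (1 - s) = ν := by rw [hμ_def, one_div, rpow_inv_rpow hν0.le h1s.ne']
  have hμs : μ ^ s = ν ^ (s / (1 - s)) := by rw [hμ_def, ← rpow_mul hν0.le, one_div_mul_eq_div]
  have hμ₀μ : μ₀ ≤ μ := (rpow_le_rpow_iff hμ₀.le hμ.le h1s).1 (hμν ▸ hν)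
  have key := le_of_interpolation_of_le_add hs0.le hs1.le hC.le (by positivity) hy hz hμ
    hinterp (huc μ hμ₀μ)
  rw [hμs, hμν] at key
  have hobs : C * (1 - s) * C ≤ C * (C + 1 + C ^ (1 - s)) := by
    nlinarith [mul_pos (mul_pos hC hC) hs0, mul_pos hC hCs]
  have hhigh : C * (s + C ^ (1 - s)) ≤ C * (C + 1 + C ^ (1 - s)) := by
    nlinarith [mul_pos hC hC, mul_pos hC (sub_pos.2 hs1)]
  calc x ≤ C * (1 - s) * ν ^ (s / (1 - s)) * (C * exp (κ * μ) * N)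
        + C * (s + C ^ (1 - s)) * y / ν := key
    _ = C * (1 - s) * C * (ν ^ (s / (1 - s)) * exp (κ * μ) * N)
        + C * (s + C ^ (1 - s)) / ν * y := by ring
    _ ≤ C * (C + 1 + C ^ (1 - s)) * (ν ^ (s / (1 - s)) * exp (κ * μ) * N)
        + C * (C + 1 + C ^ (1 - s)) / ν * y := by gcongr
    _ = _ := by ring

/-- Arithmetic content of the interpolation corollary of the quantitative unique
continuation theorem: an interpolation inequality combined with a unique-continuation
estimate at scale `μ` yields an estimate at the rescaled parameter `ν = μ^{1-s}`. -/
theorem stmt_3 (C κ s : ℝ) (hC : 0 < C) (hκ : 0 < κ) (hs : s ∈ Set.Ioo (0 : ℝ) 1) :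
    ∃ C' : ℝ, 0 < C' ∧
      ∀ μ₀ x y z N : ℝ, 0 < μ₀ → 0 ≤ x → 0 ≤ y → 0 ≤ z → 0 ≤ N →
        x ≤ C * z ^ (1 - s) * y ^ s →
        (∀ μ : ℝ, μ₀ ≤ μ → z ≤ C * Real.exp (κ * μ) * N + (C / μ) * y) →
        ∀ ν : ℝ, μ₀ ^ (1 - s) ≤ ν →
          x ≤ C' * ν ^ (s / (1 - s)) * Real.exp (κ * ν ^ (1 / (1 - s))) * N + (C' / ν) * y :=
  stmt_3_general C κ s hC hs
end

section
/- Let M be a nonempty compact metric space and let ω ⊆ M be a nonempty open set. Then for every ε > 0 there exists a nonempty open set ω₀ ⊆ M such that the closure of ω₀ is contained in ω and such that for every x ∈ M, dist(x, ω₀) ≤ (sup_{y ∈ M} dist(y, ω)) + ε. -/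
open Metric Set

/-- Claim (e:epseps) in Lemma l:omega-0: on a compact metric space, an open set `ω`
can be shrunk to an open set `ω₀` compactly contained in `ω` while increasing
`𝓛(M,·) = sup_y dist(y, ·)` by at most `ε`. -/
theorem stmt_7 (M : Type*) [MetricSpace M] [CompactSpace M] [Nonempty M]
    (ω : Set M) (hω : IsOpen ω) (hne : ω.Nonempty) :
    ∀ ε : ℝ, 0 < ε → ∃ ω₀ : Set M, IsOpen ω₀ ∧ ω₀.Nonempty ∧ closure ω₀ ⊆ ω ∧
      ∀ x : M, Metric.infDist x ω₀ ≤ (⨆ y : M, Metric.infDist y ω) + ε := by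
  intro ε hε
  have hε4 : 0 < ε / 4 := by linarith
  -- finite cover of M by balls of radius ε/4
  obtain ⟨t, -, htfin, htcov⟩ :=
    finite_cover_balls_of_compact (isCompact_univ (X := M)) hε4
  -- choose points z i in ω, close to i when possible
  have hz : ∀ i : M, ∃ z, z ∈ ω ∧
      ((Metric.ball i (ε/4) ∩ ω).Nonempty → z ∈ Metric.ball i (ε/4)) := by
    intro i
    by_cases h : (Metric.ball i (ε/4) ∩ ω).Nonempty
    · obtain ⟨z, hz1, hz2⟩ := h
      exact ⟨z, hz2, fun _ => hz1⟩
    · exact ⟨hne.some, hne.some_mem, fun hc => absurd hc h⟩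
  choose z hzω hzb using hz
  -- choose radii with closure of ball inside ω
  have hr : ∀ i : M, ∃ r > 0, closure (Metric.ball (z i) r) ⊆ ω := by
    intro i
    obtain ⟨s, hs0, hsω⟩ := Metric.isOpen_iff.1 hω (z i) (hzω i)
    refine ⟨s/2, by linarith, ?_⟩
    exact (Metric.closure_ball_subset_closedBall.trans
      (Metric.closedBall_subset_ball (by linarith))).trans hsω
  choose r hr0 hrω using hr
  set ω₀ : Set M := ⋃ i ∈ t, Metric.ball (z i) (r i) with hω₀
  have hL : ∀ x : M, Metric.infDist x ω ≤ ⨆ y : M, Metric.infDist y ω := by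
    intro x
    exact le_ciSup ((isCompact_range (Metric.continuous_infDist_pt ω)).bddAbove) x
  refine ⟨ω₀, isOpen_biUnion fun i _ => Metric.isOpen_ball, ?_, ?_, ?_⟩
  · obtain ⟨w, hw⟩ := hne
    obtain ⟨i, hit, hwi⟩ := Set.mem_iUnion₂.1 (htcov (Set.mem_univ w))
    exact ⟨z i, Set.mem_biUnion hit (Metric.mem_ball_self (hr0 i))⟩
  · rw [hω₀, Set.Finite.closure_biUnion htfin]
    exact Set.iUnion₂_subset fun i _ => hrω i
  · intro x
    have h1 : Metric.infDist x ω < Metric.infDist x ω + ε/4 := by linarith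
    obtain ⟨z', hz'ω, hz'd⟩ := (Metric.infDist_lt_iff hne).1 h1
    obtain ⟨i, hit, hz'i⟩ := Set.mem_iUnion₂.1 (htcov (Set.mem_univ z'))
    have hzi : z i ∈ Metric.ball i (ε/4) := hzb i ⟨z', hz'i, hz'ω⟩
    have hmem : z i ∈ ω₀ := Set.mem_biUnion hit (Metric.mem_ball_self (hr0 i))
    have h2 : Metric.infDist x ω₀ ≤ dist x (z i) := Metric.infDist_le_dist_of_mem hmem
    have h3 : dist x (z i) ≤ dist x z' + dist z' (z i) := dist_triangle _ _ _
    have h4 : dist z' (z i) ≤ dist z' i + dist i (z i) := dist_triangle _ _ _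
    have h5 : dist z' i < ε/4 := Metric.mem_ball.1 hz'i
    have h6 : dist i (z i) < ε/4 := by
      rw [dist_comm]; exact Metric.mem_ball.1 hzi
    have := hL x
    linarith
end

section
/- Let T > 0, let E : ℝ → ℝ be differentiable on [0,T] with E(t) ≥ 0 for all t ∈ [0,T], and let g : ℝ → ℝ be continuous and nonnegative on [0,T]. Assume that for every t ∈ [0,T] one has E'(t) ≤ g(t) · √(2·E(t)). Then for every t ∈ [0,T], √(2·E(t)) ≤ √(2·E(0)) + ∫₀ᵗ g(s) ds. -/
/-- Square-root Gronwall inequality (core of the energy estimate of Lemma lmNRJ):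
if `E ≥ 0` is differentiable with `E'(t) ≤ g(t)√(2E(t))` on `[0,T]`, then
`√(2E(t)) ≤ √(2E(0)) + ∫₀ᵗ g`. -/
theorem stmt_11 (T : ℝ) (hT : 0 < T) (E E' g : ℝ → ℝ)
    (hE : ∀ t ∈ Set.Icc (0 : ℝ) T, 0 ≤ E t)
    (hderiv : ∀ t ∈ Set.Icc (0 : ℝ) T, HasDerivAt E (E' t) t)
    (hg : ContinuousOn g (Set.Icc (0 : ℝ) T))
    (hgnn : ∀ t ∈ Set.Icc (0 : ℝ) T, 0 ≤ g t)
    (hbound : ∀ t ∈ Set.Icc (0 : ℝ) T, E' t ≤ g t * Real.sqrt (2 * E t)) :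
    ∀ t ∈ Set.Icc (0 : ℝ) T,
      Real.sqrt (2 * E t) ≤ Real.sqrt (2 * E 0) + ∫ s in (0:ℝ)..t, g s := by
  intro t ht
  have h0 : (0:ℝ) ∈ Set.Icc (0:ℝ) T := ⟨le_rfl, hT.le⟩
  have key : ∀ ε : ℝ, 0 < ε →
      Real.sqrt (2 * E t + ε) ≤ Real.sqrt (2 * E 0 + ε) + ∫ s in (0:ℝ)..t, g s := by
    intro ε hε
    set φ : ℝ → ℝ := fun x => Real.sqrt (2 * E x + ε) - ∫ s in (0:ℝ)..x, g s with hφ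
    have hgint : MeasureTheory.IntegrableOn g (Set.uIcc (0:ℝ) T) := by
      rw [Set.uIcc_of_le hT.le]; exact hg.integrableOn_Icc
    have hEcont : ContinuousOn E (Set.Icc (0:ℝ) T) := fun x hx =>
      (hderiv x hx).continuousAt.continuousWithinAt
    have hcontφ : ContinuousOn φ (Set.Icc (0:ℝ) T) := by
      apply ContinuousOn.sub
      · exact Real.continuous_sqrt.comp_continuousOn
          ((continuousOn_const.mul hEcont).add continuousOn_const)
      · have := intervalIntegral.continuousOn_primitive_interval hgint
        rwa [Set.uIcc_of_le hT.le] at this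
    have hint : interior (Set.Icc (0:ℝ) T) = Set.Ioo (0:ℝ) T := interior_Icc
    have hderivφ : ∀ x ∈ Set.Ioo (0:ℝ) T,
        HasDerivAt φ (E' x / Real.sqrt (2 * E x + ε) - g x) x := by
      intro x hx
      have hx' : x ∈ Set.Icc (0:ℝ) T := Set.Ioo_subset_Icc_self hx
      have hpos : 0 < 2 * E x + ε := by
        have := hE x hx'; linarith
      have h1 : HasDerivAt (fun y => 2 * E y + ε) (2 * E' x) x :=
        ((hderiv x hx').const_mul 2).add_const ε
      have h2 := h1.sqrt hpos.ne'
      have h2' : HasDerivAt (fun y => Real.sqrt (2 * E y + ε))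
          (E' x / Real.sqrt (2 * E x + ε)) x := by
        convert h2 using 1
        have hs : Real.sqrt (2 * E x + ε) ≠ 0 := by
          positivity
        field_simp
      have hgi : IntervalIntegrable g MeasureTheory.volume 0 x := by
        apply (hg.mono _).intervalIntegrable
        rw [Set.uIcc_of_le hx.1.le]
        exact Set.Icc_subset_Icc le_rfl hx.2.le
      have hca : ContinuousAt g x :=
        hg.continuousAt (Icc_mem_nhds hx.1 hx.2)
      have hsm : StronglyMeasurableAtFilter g (nhds x) MeasureTheory.volume :=
        (hg.mono Set.Ioo_subset_Icc_self).stronglyMeasurableAtFilter isOpen_Ioo x hx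
      have h3 : HasDerivAt (fun u => ∫ s in (0:ℝ)..u, g s) (g x) x :=
        intervalIntegral.integral_hasDerivAt_right hgi hsm hca
      exact h2'.sub h3
    have hanti : AntitoneOn φ (Set.Icc (0:ℝ) T) := by
      apply antitoneOn_of_deriv_nonpos (convex_Icc 0 T) hcontφ
      · rw [hint]
        exact fun x hx => (hderivφ x hx).differentiableAt.differentiableWithinAt
      · rw [hint]
        intro x hx
        rw [(hderivφ x hx).deriv]
        have hx' : x ∈ Set.Icc (0:ℝ) T := Set.Ioo_subset_Icc_self hx
        have hpos : 0 < 2 * E x + ε := by have := hE x hx'; linarith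
        have hsq : Real.sqrt (2 * E x) ≤ Real.sqrt (2 * E x + ε) :=
          Real.sqrt_le_sqrt (by linarith)
        have h1 : E' x ≤ g x * Real.sqrt (2 * E x + ε) :=
          (hbound x hx').trans (mul_le_mul_of_nonneg_left hsq (hgnn x hx'))
        have hsqpos : 0 < Real.sqrt (2 * E x + ε) := Real.sqrt_pos.2 hpos
        rw [sub_nonpos, div_le_iff₀ hsqpos]
        exact h1
    have := hanti h0 ht ht.1
    simp only [hφ, intervalIntegral.integral_same, sub_zero] at this
    linarith
  refine le_of_forall_pos_le_add ?_
  intro δ hδ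
  have hkey := key (δ ^ 2) (by positivity)
  have h1 : Real.sqrt (2 * E t) ≤ Real.sqrt (2 * E t + δ ^ 2) :=
    Real.sqrt_le_sqrt (by nlinarith [sq_nonneg δ])
  have h2 : Real.sqrt (2 * E 0 + δ ^ 2) ≤ Real.sqrt (2 * E 0) + δ := by
    rw [Real.sqrt_le_iff]
    constructor
    · have := Real.sqrt_nonneg (2 * E 0); linarith
    · have h3 := Real.sq_sqrt (by have := hE 0 h0; linarith : (0:ℝ) ≤ 2 * E 0)
      have h4 := Real.sqrt_nonneg (2 * E 0)
      nlinarith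
  linarith
end
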